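/- Let Λ be a countable index set, let b, c > 0, and for each λ ∈ Λ let s_λ : ℝ → [0,∞] and κ_λ > 0 be such that s_λ(κ_λ t) ≥ (b/2)·t² whenever |t| ≤ c and s_λ(κ_λ t) ≥ bc·|t| − bc²/2 whenever |t| > c. Define R : ℓ²(Λ) → [0,∞] by R((x_λ)_λ) = ∑_λ s_λ(κ_λ x_λ). Then R is norm-coercive: for every sequence (x^k)_k in ℓ²(Λ) with R(x^k) < ∞ for all k and ‖x^k‖_{ℓ²} → ∞, one has R(x^k) → ∞. -/
import Mathlib


open scoped ENNReal
open Filter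

noncomputable section

/-- The functional `R((x_λ)_λ) = ∑_λ s_λ(κ_λ x_λ)` on `ℓ²(Λ)` is
norm-coercive, given the quadratic/linear lower bounds on each `s_λ(κ_λ ·)`. -/
theorem statement5 {Λ : Type*} [Countable Λ]
    (b c : ℝ) (hb : 0 < b) (hc : 0 < c)
    (κ : Λ → ℝ) (hκ : ∀ l, 0 < κ l)
    (s : Λ → ℝ → ℝ≥0∞)
    (h1 : ∀ l : Λ, ∀ t : ℝ, |t| ≤ c → ENNReal.ofReal (b / 2 * t ^ 2) ≤ s l (κ l * t))
    (h2 : ∀ l : Λ, ∀ t : ℝ, c < |t| →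
      ENNReal.ofReal (b * c * |t| - b * c ^ 2 / 2) ≤ s l (κ l * t)) :
    ∀ x : ℕ → lp (fun _ : Λ => ℝ) 2,
      (∀ k, ∑' l, s l (κ l * x k l) ≠ ⊤) →
      Tendsto (fun k => ‖x k‖) atTop atTop →
      Tendsto (fun k => ∑' l, s l (κ l * x k l)) atTop (nhds ⊤) := by
  intro x _hfin hnorm
  -- Lower bound: for each `k`, the sum is at least `ofReal ((b*c/2) * (‖x k‖ - c))`.
  have key : ∀ k, ENNReal.ofReal (b * c / 2 * (‖x k‖ - c)) ≤ ∑' l, s l (κ l * x k l) := by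
    intro k
    set N : ℝ := ‖x k‖ with hN
    have hN0 : 0 ≤ N := norm_nonneg _
    have hNc : 0 < N + c := by linarith
    set C : ℝ := b * c / 2 / (N + c) with hC
    have hC0 : 0 ≤ C := by positivity
    -- pointwise bound
    have hpt : ∀ l, ENNReal.ofReal (C * (x k l) ^ 2) ≤ s l (κ l * x k l) := by
      intro l
      have habs : |x k l| ≤ N := by
        simpa [Real.norm_eq_abs] using lp.norm_apply_le_norm two_ne_zero (x k) l
      set t : ℝ := x k l with ht
      by_cases hcase : |t| ≤ c
      · refine le_trans ?_ (h1 l t hcase)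
        apply ENNReal.ofReal_le_ofReal
        have h1' : C ≤ b / 2 := by
          rw [hC, div_le_iff₀ hNc]
          nlinarith [sq_nonneg t]
        nlinarith [sq_nonneg t]
      · push_neg at hcase
        refine le_trans ?_ (h2 l t hcase)
        apply ENNReal.ofReal_le_ofReal
        have ht2 : t ^ 2 = |t| ^ 2 := (sq_abs t).symm
        have h2' : C * t ^ 2 ≤ b * c / 2 * |t| := by
          rw [hC, ht2, div_mul_eq_mul_div, div_le_iff₀ hNc]
          have h3 : |t| ≤ N + c := by linarith
          nlinarith [abs_nonneg t, mul_pos hb hc,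
            mul_nonneg (mul_nonneg (mul_pos hb hc).le (abs_nonneg t))
              (by linarith : (0:ℝ) ≤ N + c - |t|)]
        nlinarith [mul_nonneg (mul_pos hb hc).le (by linarith : (0:ℝ) ≤ |t| - c)]
    -- sum the pointwise bounds
    have hsum : Summable (fun l => (x k l) ^ 2) := by
      have := ((lp.memℓp (x k)).summable (by norm_num : (0:ℝ) < (2 : ℝ≥0∞).toReal))
      refine this.congr fun l => ?_
      rw [Real.norm_eq_abs, show ((2:ℝ≥0∞).toReal) = ((2:ℕ):ℝ) by norm_num,
        Real.rpow_natCast]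
      exact sq_abs _
    have htsum : ∑' l, (x k l) ^ 2 = N ^ 2 := by
      have h := lp.norm_rpow_eq_tsum (p := 2)
        (by norm_num : (0:ℝ) < (2 : ℝ≥0∞).toReal) (x k)
      rw [show ((2:ℝ≥0∞).toReal) = ((2:ℕ):ℝ) by norm_num] at h
      simp only [Real.rpow_natCast, Real.norm_eq_abs, sq_abs] at h
      exact h.symm
    calc ENNReal.ofReal (b * c / 2 * (N - c))
        ≤ ENNReal.ofReal (C * N ^ 2) := by
          apply ENNReal.ofReal_le_ofReal
          have heq : b * c / 2 / (N + c) * N ^ 2 = b * c * N ^ 2 / (2 * (N + c)) := by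
            field_simp
          rw [hC, heq, le_div_iff₀ (by positivity : (0:ℝ) < 2 * (N + c))]
          nlinarith [mul_nonneg (mul_nonneg (mul_pos hb hc).le hc.le) hc.le]
      _ = ENNReal.ofReal (∑' l, C * (x k l) ^ 2) := by
          rw [tsum_mul_left, htsum]
      _ = ∑' l, ENNReal.ofReal (C * (x k l) ^ 2) := by
          refine ENNReal.ofReal_tsum_of_nonneg (fun l => by positivity) ?_
          exact hsum.mul_left C
      _ ≤ ∑' l, s l (κ l * x k l) := ENNReal.tsum_le_tsum hpt
  -- conclude by comparison
  have haux : Tendsto (fun k => ENNReal.ofReal (b * c / 2 * (‖x k‖ - c))) atTop (nhds ⊤) := by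
    apply ENNReal.tendsto_ofReal_atTop.comp
    apply Tendsto.comp (g := fun N : ℝ => b * c / 2 * (N - c)) ?_ hnorm
    exact (tendsto_atTop_add_const_right _ (-c) tendsto_id).const_mul_atTop (by positivity)
  exact tendsto_nhds_top_mono haux (Eventually.of_forall key)
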